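/- arXiv:2506.09642 — 5 statements merged into one kernel-verified Lean document; each statement's English description precedes it below -/
import Mathlib

section
/- Let G be a topological group and K ⊴ G a compact normal subgroup with quotient map π : G → G/K. An element t ∈ G is elliptic if and only if π(t) is elliptic in G/K. -/
/-- For a compact normal subgroup `K` of a Hausdorff topological group `G`, an element
`t ∈ G` is elliptic if and only if its image in `G ⧸ K` is elliptic. -/
theorem elliptic_iff_elliptic_quotient {G : Type*} [Group G] [TopologicalSpace G]
    [IsTopologicalGroup G] [T2Space G] (K : Subgroup G) [K.Normal]
    (hK : IsCompact (K : Set G)) (t : G) :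
    IsCompact (closure (Subgroup.zpowers t : Set G)) ↔
      IsCompact (closure (Subgroup.zpowers ((QuotientGroup.mk' K) t) : Set (G ⧸ K))) := by
  have hKclosed : IsClosed (K : Set G) := hK.isClosed
  haveI : T3Space (G ⧸ K) := QuotientGroup.instT3Space K
  constructor
  · intro h
    have himg : IsCompact ((QuotientGroup.mk : G → G ⧸ K) '' closure (Subgroup.zpowers t)) :=
      h.image QuotientGroup.continuous_mk
    refine himg.of_isClosed_subset isClosed_closure ?_
    refine closure_minimal ?_ himg.isClosed
    rintro x ⟨n, rfl⟩
    exact ⟨t ^ n, subset_closure ⟨n, rfl⟩, by simp⟩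
  · intro h
    have hproper : IsProperMap (QuotientGroup.mk : G → G ⧸ K) := by
      rw [isProperMap_iff_isClosedMap_and_compact_fibers]
      refine ⟨QuotientGroup.continuous_mk, QuotientGroup.isClosedMap_coe hK, fun y ↦ ?_⟩
      obtain ⟨g, rfl⟩ := QuotientGroup.mk_surjective y
      have : (QuotientGroup.mk : G → G ⧸ K) ⁻¹' {(g : G ⧸ K)} = (g * ·) '' (K : Set G) := by
        ext x
        simp only [Set.mem_preimage, Set.mem_singleton_iff, Set.mem_image]
        constructor
        · intro hx
          exact ⟨g⁻¹ * x, QuotientGroup.eq.mp hx.symm, by group⟩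
        · rintro ⟨k, hk, rfl⟩
          symm
          rw [QuotientGroup.eq]
          simpa using hk
      rw [this]
      exact hK.image (continuous_mul_left g)
    have hpre : IsCompact ((QuotientGroup.mk : G → G ⧸ K) ⁻¹'
        closure (Subgroup.zpowers ((QuotientGroup.mk' K) t) : Set (G ⧸ K))) :=
      hproper.isCompact_preimage h
    refine hpre.of_isClosed_subset isClosed_closure ?_
    refine closure_minimal ?_ (isClosed_closure.preimage QuotientGroup.continuous_mk)
    rintro x ⟨n, rfl⟩
    exact subset_closure ⟨n, by simp⟩
end

section
/- If G is a topological group with a dense subset of elliptic elements and K ⊴ G is a compact normal subgroup, then G/K has a dense subset of elliptic elements; conversely, if G/K has a dense set of elliptic elements then so does G. -/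
/-- For a compact normal subgroup `K` of a Hausdorff topological group `G`, the elliptic
elements of `G` are dense if and only if the elliptic elements of `G ⧸ K` are dense. -/
theorem almostElliptic_iff_quotient_almostElliptic {G : Type*} [Group G] [TopologicalSpace G]
    [IsTopologicalGroup G] [T2Space G] (K : Subgroup G) [K.Normal]
    (hK : IsCompact (K : Set G)) :
    Dense {t : G | IsCompact (closure (Subgroup.zpowers t : Set G))} ↔
      Dense {u : G ⧸ K | IsCompact (closure (Subgroup.zpowers u : Set (G ⧸ K)))} := by
  haveI : IsClosed (K : Set G) := hK.isClosed
  have hcont : Continuous (QuotientGroup.mk : G → G ⧸ K) := continuous_quot_mk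
  -- mk is a proper map
  have hproper : IsProperMap (QuotientGroup.mk : G → G ⧸ K) := by
    rw [isProperMap_iff_isClosedMap_and_compact_fibers]
    refine ⟨hcont, QuotientGroup.isClosedMap_coe hK, fun y => ?_⟩
    obtain ⟨g, rfl⟩ := QuotientGroup.mk_surjective y
    have : (QuotientGroup.mk : G → G ⧸ K) ⁻¹' {(g : G ⧸ K)} = (g * ·) '' (K : Set G) := by
      ext x
      simp only [Set.mem_preimage, Set.mem_singleton_iff, Set.mem_image, QuotientGroup.eq]
      constructor
      · intro h
        exact ⟨g⁻¹ * x, by simpa using K.inv_mem h, by group⟩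
      · rintro ⟨k, hk, rfl⟩
        simpa using K.inv_mem hk
    rw [this]
    exact hK.image (continuous_mul_left g)
  constructor
  · intro h
    rw [← QuotientGroup.dense_preimage_mk (N := K)]
    refine h.mono ?_
    intro t ht
    simp only [Set.mem_preimage, Set.mem_setOf_eq] at ht ⊢
    have himg : IsCompact ((QuotientGroup.mk : G → G ⧸ K) '' closure (Subgroup.zpowers t : Set G)) :=
      ht.image hcont
    refine himg.of_isClosed_subset isClosed_closure ?_
    refine closure_minimal ?_ himg.isClosed
    rintro x ⟨n, rfl⟩
    exact ⟨t ^ n, subset_closure ⟨n, rfl⟩, by simp⟩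
  · intro h
    rw [← QuotientGroup.dense_preimage_mk (N := K)] at h
    refine h.mono ?_
    intro t ht
    simp only [Set.mem_preimage, Set.mem_setOf_eq] at ht ⊢
    have hsub : closure (Subgroup.zpowers t : Set G) ⊆
        (QuotientGroup.mk : G → G ⧸ K) ⁻¹' closure (Subgroup.zpowers (t : G ⧸ K) : Set (G ⧸ K)) := by
      refine closure_minimal ?_ (ht.isClosed.preimage hcont)
      intro x hx
      obtain ⟨n, rfl⟩ := hx
      exact subset_closure ⟨n, by simp⟩
    exact (hproper.isCompact_preimage ht).of_isClosed_subset isClosed_closure hsub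
end

section
/- Let K be a compact group and ρ : K → GL(V) a continuous representation on a finite-dimensional real vector space V. If the set {s ∈ K : ρ(s) − 1 is invertible} is dense in K, then the set of elliptic elements of the semidirect product G = V ⋊_ρ K is dense in G. In fact it contains the open dense set {(v,s) : ρ(s) − 1 invertible}. -/
/-- The action `K →* MulAut (Multiplicative V)` induced by a linear representation. -/
def reprToMulAut {V K : Type*} [AddCommGroup V] [Module ℝ V] [Group K]
    (ρ : K →* (V ≃ₗ[ℝ] V)) : K →* MulAut (Multiplicative V) where
  toFun s := AddEquiv.toMultiplicative (ρ s).toAddEquiv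
  map_one' := by ext x; simp only [map_one]; rfl
  map_mul' s t := by ext x; simp only [map_mul]; rfl

/-- The product topology on a semidirect product. -/
instance semidirectProductTopology {N G : Type*} [Group N] [Group G] {φ : G →* MulAut N}
    [TopologicalSpace N] [TopologicalSpace G] : TopologicalSpace (N ⋊[φ] G) :=
  TopologicalSpace.induced (fun g => (g.left, g.right)) inferInstance

section Aux

variable {V K : Type*} [AddCommGroup V] [Module ℝ V]
    [TopologicalSpace V] [IsTopologicalAddGroup V] [T2Space V]
    [Group K] [TopologicalSpace K]
    (ρ : K →* (V ≃ₗ[ℝ] V))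

/-- The semidirect product is homeomorphic to the product. -/
def sdHomeo : (Multiplicative V ⋊[reprToMulAut ρ] K) ≃ₜ Multiplicative V × K where
  toFun g := (g.left, g.right)
  invFun p := ⟨p.1, p.2⟩
  left_inv g := rfl
  right_inv p := rfl
  continuous_toFun := continuous_induced_dom
  continuous_invFun := continuous_induced_rng.mpr continuous_id

lemma continuous_left : Continuous fun g : Multiplicative V ⋊[reprToMulAut ρ] K => g.left := by
  have h : Continuous (fun g : Multiplicative V ⋊[reprToMulAut ρ] K => (g.left, g.right)) :=
    continuous_induced_dom
  exact continuous_fst.comp h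

lemma continuous_right : Continuous fun g : Multiplicative V ⋊[reprToMulAut ρ] K => g.right := by
  have h : Continuous (fun g : Multiplicative V ⋊[reprToMulAut ρ] K => (g.left, g.right)) :=
    continuous_induced_dom
  exact continuous_snd.comp h

lemma conj_formula (w : Multiplicative V) (x : Multiplicative V ⋊[reprToMulAut ρ] K) :
    (⟨w, 1⟩ : Multiplicative V ⋊[reprToMulAut ρ] K) * x * (⟨w, 1⟩ : _)⁻¹ =
      ⟨w * x.left * (reprToMulAut ρ x.right w⁻¹), x.right⟩ := by
  ext <;> simp

lemma conj_continuous (hρ : Continuous fun p : K × V => ρ p.1 p.2) (w : Multiplicative V) :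
    Continuous fun x : Multiplicative V ⋊[reprToMulAut ρ] K =>
      (⟨w, 1⟩ : Multiplicative V ⋊[reprToMulAut ρ] K) * x * (⟨w, 1⟩ : _)⁻¹ := by
  simp only [conj_formula]
  apply continuous_induced_rng.mpr
  have h1 : Continuous fun x : Multiplicative V ⋊[reprToMulAut ρ] K =>
      (reprToMulAut ρ x.right w⁻¹ : Multiplicative V) := by
    have : Continuous fun s : K => (ρ s (Multiplicative.toAdd w⁻¹) : V) :=
      hρ.comp (continuous_id.prodMk continuous_const)
    exact this.comp (continuous_right ρ)
  exact (((continuous_const.mul (continuous_left ρ)).mul h1).prodMk (continuous_right ρ))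

/-- Conjugation by `⟨w, 1⟩` as a homeomorphism. -/
def conjHomeo (hρ : Continuous fun p : K × V => ρ p.1 p.2) (w : Multiplicative V) :
    (Multiplicative V ⋊[reprToMulAut ρ] K) ≃ₜ (Multiplicative V ⋊[reprToMulAut ρ] K) where
  toFun x := (⟨w, 1⟩ : _) * x * (⟨w, 1⟩ : _)⁻¹
  invFun x := (⟨w, 1⟩ : _)⁻¹ * x * (⟨w, 1⟩ : _)
  left_inv x := by group
  right_inv x := by group
  continuous_toFun := conj_continuous ρ hρ w
  continuous_invFun := by
    have h : ((⟨w, 1⟩ : Multiplicative V ⋊[reprToMulAut ρ] K))⁻¹ = ⟨w⁻¹, 1⟩ := by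
      ext <;> simp
    have := conj_continuous ρ hρ w⁻¹
    rw [← h] at this
    simpa [h] using this

end Aux

/-- Let `K` be a compact group and `ρ : K → GL(V)` a continuous representation on a
finite-dimensional real vector space `V`. If `{s : K | ρ(s) - 1 invertible}` is dense in
`K`, then the elliptic elements of `G = V ⋊_ρ K` contain the open dense set
`{(v, s) | ρ(s) - 1 invertible}`; in particular they are dense in `G`. -/
theorem dense_elliptic_of_dense_free {V K : Type*} [AddCommGroup V] [Module ℝ V]
    [TopologicalSpace V] [IsTopologicalAddGroup V] [ContinuousSMul ℝ V] [T2Space V]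
    [FiniteDimensional ℝ V] [Group K] [TopologicalSpace K] [IsTopologicalGroup K]
    [CompactSpace K] [T2Space K] (ρ : K →* (V ≃ₗ[ℝ] V))
    (hρ : Continuous fun p : K × V => ρ p.1 p.2)
    (hdense : Dense {s : K | Function.Bijective fun v : V => ρ s v - v}) :
    (∀ g : Multiplicative V ⋊[reprToMulAut ρ] K,
        (Function.Bijective fun v : V => ρ g.right v - v) →
          IsCompact (closure (Subgroup.zpowers g :
            Set (Multiplicative V ⋊[reprToMulAut ρ] K)))) ∧
      Dense {g : Multiplicative V ⋊[reprToMulAut ρ] K |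
        IsCompact (closure (Subgroup.zpowers g :
          Set (Multiplicative V ⋊[reprToMulAut ρ] K)))} := by
  set G := Multiplicative V ⋊[reprToMulAut ρ] K
  haveI : T2Space (Multiplicative V) := ‹T2Space V›
  have main : ∀ g : G, (Function.Bijective fun v : V => ρ g.right v - v) →
      IsCompact (closure (Subgroup.zpowers g : Set G)) := by
    intro g hbij
    -- find w₀ solving ρ s w₀ - w₀ = - toAdd g.left
    obtain ⟨w₀, hw₀⟩ := hbij.surjective (-(Multiplicative.toAdd g.left))
    set c : G := ⟨Multiplicative.ofAdd w₀, 1⟩ with hc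
    set g₀ : G := ⟨1, g.right⟩ with hg₀def
    have hg : g = c * g₀ * c⁻¹ := by
      rw [hc, hg₀def, conj_formula]
      ext
      · show g.left = Multiplicative.ofAdd w₀ * 1 *
          (reprToMulAut ρ g.right (Multiplicative.ofAdd w₀)⁻¹)
        have hr : (reprToMulAut ρ g.right (Multiplicative.ofAdd w₀)⁻¹ : Multiplicative V) =
            Multiplicative.ofAdd (ρ g.right (-w₀)) := rfl
        rw [hr]
        apply Multiplicative.toAdd.injective
        simp only [toAdd_mul, toAdd_one, toAdd_ofAdd, map_neg]
        have h := hw₀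
        simp only at h
        have h2 : w₀ - (ρ g.right) w₀ = Multiplicative.toAdd g.left := by
          rw [← neg_neg (Multiplicative.toAdd g.left), ← h]; abel
        rw [← h2]; abel
      · rfl
    -- closure of zpowers g₀ is compact
    have hsub : (Subgroup.zpowers g₀ : Set G) ⊆ {x : G | x.left = 1} := by
      rintro x ⟨n, rfl⟩
      show ((SemidirectProduct.inr (φ := reprToMulAut ρ) g.right) ^ n).left = 1
      rw [← map_zpow]
      rfl
    have hclosed : IsClosed {x : G | x.left = 1} := by
      have : {x : G | x.left = 1} = (fun x : G => x.left) ⁻¹' {1} := rfl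
      rw [this]
      exact isClosed_singleton.preimage (continuous_left ρ)
    have hScompact : IsCompact {x : G | x.left = 1} := by
      have : {x : G | x.left = 1} = (sdHomeo ρ).symm '' ({1} ×ˢ Set.univ) := by
        ext x
        simp only [Set.mem_image, Set.mem_prod, Set.mem_singleton_iff, Set.mem_univ, and_true]
        constructor
        · intro hx
          exact ⟨(x.left, x.right), hx, by
            show (⟨x.left, x.right⟩ : G) = x; rfl⟩
        · rintro ⟨p, hp, rfl⟩
          exact hp
      rw [this]
      exact (isCompact_singleton.prod isCompact_univ).image (sdHomeo ρ).symm.continuous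
    have hK0 : IsCompact (closure (Subgroup.zpowers g₀ : Set G)) :=
      hScompact.of_isClosed_subset isClosed_closure (closure_minimal hsub hclosed)
    -- conjugate
    have himg : (Subgroup.zpowers g : Set G) =
        (conjHomeo ρ hρ (Multiplicative.ofAdd w₀)) '' (Subgroup.zpowers g₀ : Set G) := by
      ext x
      simp only [Set.mem_image, SetLike.mem_coe, Subgroup.mem_zpowers_iff]
      constructor
      · rintro ⟨n, rfl⟩
        exact ⟨g₀ ^ n, ⟨n, rfl⟩, by rw [hg]; exact (conj_zpow).symm⟩
      · rintro ⟨y, ⟨n, rfl⟩, rfl⟩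
        exact ⟨n, by rw [hg]; exact conj_zpow⟩
    rw [himg, ← Homeomorph.image_closure]
    exact hK0.image (conjHomeo ρ hρ (Multiplicative.ofAdd w₀)).continuous
  refine ⟨main, ?_⟩
  have hdense2 : Dense {g : G | Function.Bijective fun v : V => ρ g.right v - v} := by
    have : {g : G | Function.Bijective fun v : V => ρ g.right v - v} =
        (sdHomeo ρ) ⁻¹' (Set.univ ×ˢ {s : K | Function.Bijective fun v : V => ρ s v - v}) := by
      ext g; simp [sdHomeo]
    rw [this]
    rw [dense_iff_closure_eq, ← Homeomorph.preimage_closure,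
      (dense_univ.prod hdense).closure_eq]
    simp
  exact hdense2.mono fun g hg => main g hg
end

section
/- Let K be a compact group and ρ : K → GL(V) a finite-dimensional real representation such that the set K_fr = {s ∈ K : ρ(s) − 1 invertible} is dense in K. Then the semidirect product V ⋊_ρ K is openly almost-elliptic: it contains an open dense set of elliptic elements. -/
/-- Let `K` be a compact group and `ρ : K → GL(V)` a continuous finite-dimensional real
representation with `K_fr = {s : K | ρ(s) - 1 invertible}` dense in `K`. Then the
semidirect product `V ⋊_ρ K` is openly almost-elliptic: it contains an open dense set
consisting of elliptic elements. -/
theorem openly_almost_elliptic_of_dense_free {V K : Type*} [AddCommGroup V] [Module ℝ V]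
    [TopologicalSpace V] [IsTopologicalAddGroup V] [ContinuousSMul ℝ V] [T2Space V]
    [FiniteDimensional ℝ V] [Group K] [TopologicalSpace K] [IsTopologicalGroup K]
    [CompactSpace K] [T2Space K] (ρ : K →* (V ≃ₗ[ℝ] V))
    (hρ : Continuous fun p : K × V => ρ p.1 p.2)
    (hdense : Dense {s : K | Function.Bijective fun v : V => ρ s v - v}) :
    ∃ U : Set (Multiplicative V ⋊[reprToMulAut ρ] K),
      IsOpen U ∧ Dense U ∧ ∀ g ∈ U,
        IsCompact (closure (Subgroup.zpowers g :
          Set (Multiplicative V ⋊[reprToMulAut ρ] K))) := by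
  classical
  haveI : T2Space (Multiplicative V) := ‹T2Space V›
  set G := Multiplicative V ⋊[reprToMulAut ρ] K with hG
  let e : G ≃ₜ (Multiplicative V × K) :=
    { toFun := fun g => (g.left, g.right)
      invFun := fun p => ⟨p.1, p.2⟩
      left_inv := fun g => rfl
      right_inv := fun p => rfl
      continuous_toFun := continuous_induced_dom
      continuous_invFun := continuous_induced_rng.mpr continuous_id }
  set S := {s : K | Function.Bijective fun v : V => ρ s v - v} with hS
  let f : K → (V →ₗ[ℝ] V) := fun s => (ρ s).toLinearMap - LinearMap.id
  have hfun : ∀ s : K, (fun v : V => ρ s v - v) = ⇑(f s) := by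
    intro s; ext v; simp [f]
  have hbij : ∀ s : K, (s ∈ S ↔ LinearMap.det (f s) ≠ 0) := by
    intro s
    constructor
    · intro h
      rw [hS, Set.mem_setOf_eq, hfun] at h
      have := (LinearEquiv.ofBijective _ h).isUnit_det'
      have he : ((LinearEquiv.ofBijective _ h : V ≃ₗ[ℝ] V) : V →ₗ[ℝ] V) = f s := by ext; simp
      simpa [he] using this.ne_zero
    · intro h
      rw [hS, Set.mem_setOf_eq, hfun]
      exact (LinearMap.equivOfDetNeZero _ h).bijective
  have hSopen : IsOpen S := by
    have hcont : Continuous fun s : K => LinearMap.det (f s) := by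
      let b := Module.finBasis ℝ V
      have hdet : ∀ s : K, LinearMap.det (f s) = (LinearMap.toMatrix b b (f s)).det :=
        fun s => (LinearMap.det_toMatrix b _).symm
      simp only [hdet]
      apply Continuous.matrix_det
      apply continuous_matrix
      intro i j
      have h1 : Continuous fun sk : K => ρ sk (b j) - b j :=
        (hρ.comp (continuous_id.prodMk continuous_const)).sub continuous_const
      have h2 : Continuous (b.coord i) := (b.coord i).continuous_of_finiteDimensional
      have hentry : ∀ sk : K, (LinearMap.toMatrix b b (f sk)) i j =
          b.coord i (ρ sk (b j) - b j) := by
        intro sk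
        rw [LinearMap.toMatrix_apply, Module.Basis.coord_apply]
        simp [f]
      simp only [hentry]
      exact h2.comp h1
    have : S = (fun s : K => LinearMap.det (f s)) ⁻¹' {0}ᶜ := by
      ext s; simpa using hbij s
    rw [this]
    exact isOpen_compl_singleton.preimage hcont
  refine ⟨e ⁻¹' (Set.univ ×ˢ S), (isOpen_univ.prod hSopen).preimage e.continuous, ?_, ?_⟩
  · have hd : Dense ((Set.univ : Set (Multiplicative V)) ×ˢ S) := dense_univ.prod hdense
    intro x
    have hcl : closure (e ⁻¹' (Set.univ ×ˢ S)) = e ⁻¹' closure (Set.univ ×ˢ S) :=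
      (e.preimage_closure _).symm
    rw [hcl, hd.closure_eq]
    trivial
  · rintro g hg
    have hs : g.right ∈ S := hg.2
    obtain ⟨w, hw⟩ := hs.surjective (Multiplicative.toAdd g.left)
    set s := g.right with hsr
    set c : G := ⟨Multiplicative.ofAdd w, 1⟩ with hc
    set h : G := SemidirectProduct.inr s with hh
    -- key conjugation formula
    have key : ∀ x : G, (c⁻¹ * x) * c =
        ⟨Multiplicative.ofAdd (-w + Multiplicative.toAdd x.left + ρ x.right w), x.right⟩ := by
      intro x
      apply SemidirectProduct.ext
      · rw [SemidirectProduct.mul_left, SemidirectProduct.mul_left,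
          SemidirectProduct.inv_left, SemidirectProduct.mul_right,
          SemidirectProduct.inv_right, hc]
        show (reprToMulAut ρ (1 : K)⁻¹) (Multiplicative.ofAdd w)⁻¹ *
            (reprToMulAut ρ (1 : K)⁻¹) x.left *
            (reprToMulAut ρ ((1 : K)⁻¹ * x.right)) (Multiplicative.ofAdd w) = _
        rw [inv_one, map_one, one_mul]
        apply Multiplicative.toAdd.injective
        show -w + Multiplicative.toAdd x.left + ρ x.right w =
          -w + Multiplicative.toAdd x.left + ρ x.right w
        rfl
      · rw [SemidirectProduct.mul_right, SemidirectProduct.mul_right,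
          SemidirectProduct.inv_right, hc]
        show (1 : K)⁻¹ * x.right * 1 = x.right
        rw [inv_one, one_mul, mul_one]
    have hconj : g = c⁻¹ * h * c := by
      rw [key]
      apply SemidirectProduct.ext
      · show g.left = Multiplicative.ofAdd (-w + Multiplicative.toAdd h.left + ρ h.right w)
        have h1 : Multiplicative.toAdd (h.left) = 0 := rfl
        have h2 : h.right = s := rfl
        rw [h1, h2]
        apply Multiplicative.toAdd.injective
        show Multiplicative.toAdd g.left = -w + 0 + ρ s w
        rw [← hw]; abel
      · rfl
    let T : Multiplicative V × K → Multiplicative V × K := fun p =>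
      (Multiplicative.ofAdd (-w + Multiplicative.toAdd p.1 + ρ p.2 w), p.2)
    have hT : Continuous T := by
      apply Continuous.prodMk
      · exact continuous_ofAdd.comp
          (((continuous_const.add (continuous_toAdd.comp continuous_fst)).add
            (hρ.comp (continuous_snd.prodMk continuous_const))))
      · exact continuous_snd
    have hTe : ∀ x : G, e ((c⁻¹ * x) * c) = T (e x) := by
      intro x; rw [key]; rfl
    have hpow : ∀ n : ℤ, e (g ^ n) = T (e ((SemidirectProduct.inr (s ^ n) : G))) := by
      intro n
      have h1 : g ^ n = (c⁻¹ * (SemidirectProduct.inr (s ^ n) : G)) * c := by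
        rw [hconj]
        have h2 : (c⁻¹ * h) * c = (MulAut.conj c⁻¹) h := by
          rw [MulAut.conj_apply, inv_inv]
        rw [h2, ← map_zpow, MulAut.conj_apply, hh, ← map_zpow]
        rw [inv_inv]
      rw [h1, hTe]
    set Z := (Subgroup.zpowers h : Set G) with hZ
    have hAsub : (e '' Z) ⊆ ({(1 : Multiplicative V)} ×ˢ (Set.univ : Set K)) := by
      rintro _ ⟨x, hx, rfl⟩
      obtain ⟨n, rfl⟩ := Subgroup.mem_zpowers_iff.mp hx
      have h3 : h ^ n = (SemidirectProduct.inr (s ^ n) : G) := by rw [hh, ← map_zpow]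
      rw [h3]
      exact ⟨rfl, trivial⟩
    have hcpt1 : IsCompact (({(1 : Multiplicative V)} ×ˢ (Set.univ : Set K))) :=
      isCompact_singleton.prod isCompact_univ
    have hcl1 : IsClosed (({(1 : Multiplicative V)} ×ˢ (Set.univ : Set K))) :=
      isClosed_singleton.prod isClosed_univ
    have hAcpt : IsCompact (closure (e '' Z)) :=
      hcpt1.of_isClosed_subset isClosed_closure (closure_minimal hAsub hcl1)
    have hBcpt : IsCompact (T '' closure (e '' Z)) := hAcpt.image hT
    have hBcl : IsClosed (T '' closure (e '' Z)) := hBcpt.isClosed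
    have hsub : e '' (Subgroup.zpowers g : Set G) ⊆ T '' closure (e '' Z) := by
      rintro _ ⟨x, hx, rfl⟩
      obtain ⟨n, rfl⟩ := Subgroup.mem_zpowers_iff.mp hx
      rw [hpow n]
      refine ⟨e (SemidirectProduct.inr (s ^ n)), subset_closure ?_, rfl⟩
      exact ⟨SemidirectProduct.inr (s ^ n),
        Subgroup.mem_zpowers_iff.mpr ⟨n, by rw [hh, ← map_zpow]⟩, rfl⟩
    have hCcpt : IsCompact (closure (e '' (Subgroup.zpowers g : Set G))) :=
      hBcpt.of_isClosed_subset isClosed_closure (closure_minimal hsub hBcl)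
    have hfinal : closure (Subgroup.zpowers g : Set G) =
        e ⁻¹' closure (e '' (Subgroup.zpowers g : Set G)) := by
      rw [e.preimage_closure, e.injective.preimage_image]
    rw [hfinal]
    exact e.isCompact_preimage.mpr hCcpt
end

section
/- For every complex number λ with |λ| = 1 and λ ≠ 1 there exists a positive integer k such that |λ^k − 1| ≥ √3. -/
open Real

lemma cos_le_neg_half {x : ℝ} (h1 : 2*π/3 ≤ x) (h2 : x ≤ 4*π/3) :
    Real.cos x ≤ -(1/2) := by
  have hπ := Real.pi_pos
  have h3 : Real.cos (x - π) = -Real.cos x := Real.cos_sub_pi x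
  have h4 : Real.cos (|x - π|) = Real.cos (x - π) := Real.cos_abs _
  have h5 : |x - π| ≤ π/3 := by
    rw [abs_le]; constructor <;> linarith
  have h6 : Real.cos (π/3) ≤ Real.cos (|x - π|) :=
    Real.cos_le_cos_of_nonneg_of_le_pi (abs_nonneg _) (by linarith) h5
  rw [Real.cos_pi_div_three] at h6
  linarith

/-- For every complex number `λ` on the unit circle with `λ ≠ 1` there is a positive
integer `k` with `|λ ^ k - 1| ≥ √3`. -/
theorem exists_pow_far_from_one (lam : ℂ) (habs : ‖lam‖ = 1) (hne : lam ≠ 1) :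
    ∃ k : ℕ, 0 < k ∧ Real.sqrt 3 ≤ ‖lam ^ k - 1‖ := by
  have hπ := Real.pi_pos
  set θ := Complex.arg lam with hθdef
  have hlam : lam = Complex.exp (θ * Complex.I) := by
    conv_lhs => rw [← Complex.norm_mul_exp_arg_mul_I lam]
    rw [habs, Complex.ofReal_one, one_mul]
  have hθne : θ ≠ 0 := by
    intro h
    apply hne
    rw [hlam, h]
    simp
  -- key: suffices to find k with cos(k θ) ≤ -1/2
  suffices h : ∃ k : ℕ, 0 < k ∧ Real.cos (k * θ) ≤ -(1/2) by
    obtain ⟨k, hk, hcos⟩ := h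
    refine ⟨k, hk, ?_⟩
    have hpow : lam ^ k = Complex.exp ((k * θ : ℝ) * Complex.I) := by
      rw [hlam, ← Complex.exp_nat_mul]
      push_cast
      ring_nf
    have hre : (lam ^ k - 1).re = Real.cos (k * θ) - 1 := by
      rw [hpow]; simp only [Complex.sub_re, Complex.one_re, Complex.exp_ofReal_mul_I_re]
    have him : (lam ^ k - 1).im = Real.sin (k * θ) := by
      rw [hpow]; simp only [Complex.sub_im, Complex.one_im, Complex.exp_ofReal_mul_I_im, sub_zero]
    have hsq : (‖lam ^ k - 1‖)^2 = 2 - 2 * Real.cos (k * θ) := by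
      rw [Complex.sq_norm, Complex.normSq_apply, hre, him]
      have := Real.sin_sq_add_cos_sq ((k : ℝ) * θ)
      nlinarith
    have h3 : (3 : ℝ) ≤ (‖lam ^ k - 1‖)^2 := by rw [hsq]; linarith
    calc Real.sqrt 3 ≤ Real.sqrt ((‖lam ^ k - 1‖)^2) := Real.sqrt_le_sqrt h3
      _ = ‖lam ^ k - 1‖ := Real.sqrt_sq (norm_nonneg _)
  -- work with φ = |θ| ∈ (0, π]
  set φ := |θ| with hφdef
  have hφpos : 0 < φ := abs_pos.mpr hθne
  have hφle : φ ≤ π := abs_le.mpr ⟨le_of_lt (Complex.neg_pi_lt_arg lam), Complex.arg_le_pi lam⟩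
  have hcosφ : ∀ k : ℕ, Real.cos (k * θ) = Real.cos (k * φ) := by
    intro k
    rw [← Real.cos_abs ((k:ℝ) * θ), abs_mul, Nat.abs_cast]
  by_cases hbig : 2*π/3 ≤ φ
  · exact ⟨1, one_pos, by
      rw [hcosφ]
      push_cast
      rw [one_mul]
      exact cos_le_neg_half hbig (by linarith)⟩
  · push_neg at hbig
    set k := ⌈(2*π/3) / φ⌉₊ with hkdef
    have hratio : (0:ℝ) < (2*π/3) / φ := by positivity
    have hk1 : 0 < k := Nat.ceil_pos.mpr hratio
    have hge : 2*π/3 ≤ k * φ := by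
      have := Nat.le_ceil ((2*π/3) / φ)
      calc 2*π/3 = ((2*π/3)/φ) * φ := by field_simp
        _ ≤ k * φ := by apply mul_le_mul_of_nonneg_right this hφpos.le
    have hlt : (k:ℝ) * φ ≤ 4*π/3 := by
      have hceil : (k:ℝ) < (2*π/3)/φ + 1 := Nat.ceil_lt_add_one hratio.le
      have : (k:ℝ) * φ < ((2*π/3)/φ + 1) * φ := by
        apply mul_lt_mul_of_pos_right hceil hφpos
      rw [add_mul, div_mul_cancel₀ _ hφpos.ne', one_mul] at this
      linarith
    exact ⟨k, hk1, by rw [hcosφ]; exact cos_le_neg_half hge hlt⟩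
end
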